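/- Let u, v ∈ K with ‖u‖ ≤ 1 and ‖v‖ ≤ 1, and let ε be a real number with ‖u − v‖ ≤ ε ≤ p^{−1/(p−1)}. Then for every integer i ≥ 1 one has ‖u^i/i − v^i/i‖ ≤ ε, where i denotes the image of the natural number i in K (which is nonzero). -/

import Mathlib

/-!
Write `i = p ^ k * m` with `p ∤ m`, so that `‖i‖ = p⁻ᵏ`. On the closed unit ball of an
ultrametric ring `u ↦ u ^ m` is `1`-Lipschitz, since `u ^ m - v ^ m` is `u - v` times a sum of
products of elements of norm at most `1`. Raising to the `p`-th power contracts by `p⁻¹` at scale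
`ε ≤ p ^ (-1 / (p - 1))`: in `(w + v) ^ p - v ^ p` the middle binomial terms carry a factor `p`,
and the last one is `w ^ p`, of norm at most `ε ^ p ≤ p⁻¹ ε`. Hence
`‖u ^ i - v ^ i‖ ≤ p⁻ᵏ ε = ‖i‖ ε`.
-/

open Finset IsUltrametricDist

lemma pow_le_inv_mul_of_le_rpow {p : ℕ} (hp : 1 < p) {ε : ℝ} (hε₀ : 0 ≤ ε)
    (hε : ε ≤ (p : ℝ) ^ (-1 / ((p : ℝ) - 1))) :
    ε ^ p ≤ (p : ℝ)⁻¹ * ε := by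
  have hp' : (1 : ℝ) < p := by exact_mod_cast hp
  have hpow : ((p : ℝ) ^ (-1 / ((p : ℝ) - 1))) ^ (p - 1) = (p : ℝ)⁻¹ := by
    rw [← Real.rpow_natCast, ← Real.rpow_mul (by positivity), Nat.cast_sub hp.le, Nat.cast_one,
      div_mul_cancel₀ _ (by linarith), Real.rpow_neg_one]
  calc ε ^ p = ε ^ (p - 1) * ε := by rw [← pow_succ, Nat.sub_add_cancel hp.le]
    _ ≤ (p : ℝ)⁻¹ * ε := by
      gcongr
      exact hpow ▸ pow_le_pow_left₀ hε₀ hε _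

lemma norm_pow_le_one_of_norm_le_one {R : Type*} [NormedRing R] [NormOneClass R] {u : R}
    (hu : ‖u‖ ≤ 1) (n : ℕ) : ‖u ^ n‖ ≤ 1 :=
  (norm_pow_le u n).trans (pow_le_one₀ (norm_nonneg u) hu)

lemma IsUltrametricDist.norm_sub_le_max {E : Type*} [SeminormedAddCommGroup E]
    [IsUltrametricDist E] (x y : E) : ‖x - y‖ ≤ max ‖x‖ ‖y‖ := by
  simpa only [dist_eq_norm, sub_zero, zero_sub, norm_neg] using dist_triangle_max x 0 y

section Ultrametric

variable {R : Type*} [NormedCommRing R] [NormOneClass R] [IsUltrametricDist R] {u v : R}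

lemma norm_pow_sub_pow_le_norm_sub (hu : ‖u‖ ≤ 1) (hv : ‖v‖ ≤ 1) (n : ℕ) :
    ‖u ^ n - v ^ n‖ ≤ ‖u - v‖ := by
  rw [← geom_sum₂_mul]
  refine (norm_mul_le _ _).trans <| mul_le_of_le_one_left (norm_nonneg _)
    (norm_sum_le_of_forall_le_of_nonneg zero_le_one fun i _ => ?_)
  exact (norm_mul_le _ _).trans (mul_le_one₀ (norm_pow_le_one_of_norm_le_one hu i) (norm_nonneg _)
    (norm_pow_le_one_of_norm_le_one hv _))

lemma norm_pow_prime_sub_pow_le {p : ℕ} (hp : p.Prime) (hu : ‖u‖ ≤ 1) (hv : ‖v‖ ≤ 1) :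
    ‖u ^ p - v ^ p‖ ≤ max (‖(p : R)‖ * ‖u - v‖) (‖u - v‖ ^ p) := by
  set w := u - v
  have hw : ‖w‖ ≤ 1 := (norm_sub_le_max u v).trans (max_le hu hv)
  have hbinom : u ^ p - v ^ p
      = p * ∑ k ∈ Ioo 0 p, w ^ k * v ^ (p - k) * ↑(p.choose k / p) + w ^ p := by
    rw [← sub_add_cancel u v, add_pow_prime_eq' hp]
    ring
  have hterm : ∀ k ∈ Ioo 0 p, ‖w ^ k * v ^ (p - k) * ↑(p.choose k / p)‖ ≤ ‖w‖ := by
    intro k hk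
    have hwk : ‖w ^ k‖ ≤ ‖w‖ :=
      (norm_pow_le w k).trans (pow_le_of_le_one (norm_nonneg w) hw (mem_Ioo.1 hk).1.ne')
    calc ‖w ^ k * v ^ (p - k) * ↑(p.choose k / p)‖
        ≤ ‖w ^ k‖ * ‖v ^ (p - k)‖ * ‖((p.choose k / p : ℕ) : R)‖ := norm_mul₃_le
      _ ≤ ‖w‖ * 1 * 1 := by
        gcongr
        · exact norm_pow_le_one_of_norm_le_one hv _
        · exact norm_natCast_le_one R _
      _ = ‖w‖ := by ring
  rw [hbinom]
  refine (norm_add_le_max _ _).trans (max_le_max ?_ (norm_pow_le w p))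
  exact (norm_mul_le _ _).trans
    (by gcongr; exact norm_sum_le_of_forall_le_of_nonneg (norm_nonneg w) hterm)

variable {p : ℕ} {ε : ℝ}

lemma norm_pow_prime_sub_pow_le_inv_mul (hp : p.Prime) (hpR : ‖(p : R)‖ ≤ (p : ℝ)⁻¹)
    (hε : ε ≤ (p : ℝ) ^ (-1 / ((p : ℝ) - 1)))
    (hu : ‖u‖ ≤ 1) (hv : ‖v‖ ≤ 1) (huv : ‖u - v‖ ≤ ε) :
    ‖u ^ p - v ^ p‖ ≤ (p : ℝ)⁻¹ * ε := by
  have hε₀ : 0 ≤ ε := (norm_nonneg _).trans huv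
  refine (norm_pow_prime_sub_pow_le hp hu hv).trans (max_le ?_ ?_)
  · exact mul_le_mul hpR huv (norm_nonneg _) (by positivity)
  · exact (pow_le_pow_left₀ (norm_nonneg _) huv p).trans
      (pow_le_inv_mul_of_le_rpow hp.one_lt hε₀ hε)

lemma norm_pow_prime_pow_sub_pow_le (hp : p.Prime) (hpR : ‖(p : R)‖ ≤ (p : ℝ)⁻¹)
    (hε : ε ≤ (p : ℝ) ^ (-1 / ((p : ℝ) - 1)))
    (hu : ‖u‖ ≤ 1) (hv : ‖v‖ ≤ 1) (huv : ‖u - v‖ ≤ ε) (k : ℕ) :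
    ‖u ^ p ^ k - v ^ p ^ k‖ ≤ (p : ℝ)⁻¹ ^ k * ε := by
  have hε₀ : 0 ≤ ε := (norm_nonneg _).trans huv
  have hp_inv : (p : ℝ)⁻¹ ≤ 1 := inv_le_one_of_one_le₀ (by exact_mod_cast hp.one_lt.le)
  induction k with
  | zero => simpa using huv
  | succ k ih =>
    have hscale : (p : ℝ)⁻¹ ^ k * ε ≤ (p : ℝ) ^ (-1 / ((p : ℝ) - 1)) :=
      (mul_le_of_le_one_left hε₀ (pow_le_one₀ (by positivity) hp_inv)).trans hε
    rw [pow_succ, pow_mul, pow_mul, pow_succ', mul_assoc]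
    exact norm_pow_prime_sub_pow_le_inv_mul hp hpR hscale
      (norm_pow_le_one_of_norm_le_one hu _) (norm_pow_le_one_of_norm_le_one hv _) ih

lemma norm_pow_prime_pow_mul_sub_pow_le (hp : p.Prime) (hpR : ‖(p : R)‖ ≤ (p : ℝ)⁻¹)
    (hε : ε ≤ (p : ℝ) ^ (-1 / ((p : ℝ) - 1)))
    (hu : ‖u‖ ≤ 1) (hv : ‖v‖ ≤ 1) (huv : ‖u - v‖ ≤ ε)
    (k m : ℕ) : ‖u ^ (p ^ k * m) - v ^ (p ^ k * m)‖ ≤ (p : ℝ)⁻¹ ^ k * ε := by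
  rw [pow_mul, pow_mul]
  exact (norm_pow_sub_pow_le_norm_sub (norm_pow_le_one_of_norm_le_one hu _)
    (norm_pow_le_one_of_norm_le_one hv _) m).trans
    (norm_pow_prime_pow_sub_pow_le hp hpR hε hu hv huv k)

end Ultrametric

theorem log_term_close_general (p : ℕ) [Fact p.Prime]
    (K : Type*) [NormedField K]
    [Algebra ℚ_[p] K]
    (hna : IsNonarchimedean (fun x : K => ‖x‖))
    (hiso : ∀ x : ℚ_[p], ‖algebraMap ℚ_[p] K x‖ = ‖x‖)
    (u v : K) (hu : ‖u‖ ≤ 1) (hv : ‖v‖ ≤ 1)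
    (ε : ℝ) (huv : ‖u - v‖ ≤ ε) (hε : ε ≤ (p : ℝ) ^ (-1 / ((p : ℝ) - 1))) :
    ∀ i : ℕ, 1 ≤ i → (i : K) ≠ 0 ∧ ‖u ^ i / (i : K) - v ^ i / (i : K)‖ ≤ ε := by
  have hp : p.Prime := Fact.out
  have : IsUltrametricDist K := isUltrametricDist_of_isNonarchimedean_norm hna
  have hnorm (n : ℕ) : ‖(n : K)‖ = ‖(n : ℚ_[p])‖ := by
    rw [← map_natCast (algebraMap ℚ_[p] K), hiso]
  have hpK : ‖(p : K)‖ = (p : ℝ)⁻¹ := by rw [hnorm, Padic.norm_p]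
  intro i hi
  obtain ⟨k, m, hm, rfl⟩ := Nat.exists_eq_pow_mul_and_not_dvd (by omega : i ≠ 0) p hp.ne_one
  have hi_norm : ‖((p ^ k * m : ℕ) : K)‖ = (p : ℝ)⁻¹ ^ k := by
    rw [Nat.cast_mul, Nat.cast_pow, norm_mul, norm_pow, hpK, hnorm m,
      Padic.norm_natCast_eq_one_iff.2 ((Nat.Prime.coprime_iff_not_dvd hp).2 hm), mul_one]
  have hi0 : ((p ^ k * m : ℕ) : K) ≠ 0 := norm_ne_zero_iff.1 <| by
    rw [hi_norm]; exact pow_ne_zero _ (inv_ne_zero (Nat.cast_ne_zero.2 hp.ne_zero))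
  refine ⟨hi0, ?_⟩
  rw [div_sub_div_same, norm_div, div_le_iff₀ (norm_pos_iff.2 hi0), hi_norm, mul_comm ε]
  exact norm_pow_prime_pow_mul_sub_pow_le hp hpK.le hε hu hv huv k m

/-- if `‖u‖ ≤ 1`, `‖v‖ ≤ 1` and `‖u - v‖ ≤ ε ≤ p^{-1/(p-1)}`,
then `‖uⁱ/i - vⁱ/i‖ ≤ ε` for every integer `i ≥ 1` (and `(i : K) ≠ 0`). -/
theorem log_term_close (p : ℕ) [Fact p.Prime]
    (K : Type*) [NormedField K] [CompleteSpace K]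
    [Algebra ℚ_[p] K]
    (hna : IsNonarchimedean (fun x : K => ‖x‖))
    (hiso : ∀ x : ℚ_[p], ‖algebraMap ℚ_[p] K x‖ = ‖x‖)
    (u v : K) (hu : ‖u‖ ≤ 1) (hv : ‖v‖ ≤ 1)
    (ε : ℝ) (huv : ‖u - v‖ ≤ ε) (hε : ε ≤ (p : ℝ) ^ (-1 / ((p : ℝ) - 1))) :
    ∀ i : ℕ, 1 ≤ i → (i : K) ≠ 0 ∧ ‖u ^ i / (i : K) - v ^ i / (i : K)‖ ≤ ε :=
  log_term_close_general p K hna hiso u v hu hv ε huv hε
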